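/- arXiv:1710.05904 — 6 statements merged into one kernel-verified Lean document; each statement's English description precedes it below -/
import Mathlib

section
/- Let G be a perfect group presented as G = F/N, where F is the free group on a set X and N is the normal closure in F of a set R ⊆ F. For each x ∈ X choose c_x ∈ [F,F] with x⁻¹c_x ∈ N, and let G̃ be the group presented on the generating set X with relators {x⁻¹c_x : x ∈ X} ∪ {[r,x] : r ∈ R, x ∈ X}. Then the identity map on X extends uniquely to a surjective homomorphism π : G̃ → G, the kernel of π is contained in the centre of G̃ and is isomorphic to H_2(G,ℤ), and (G̃, π) is a universal central extension of G: for every group E and every surjective homomorphism p : E → G whose kernel is contained in the centre of E, there is a unique homomorphism f : G̃ → E with p ∘ f = π. -/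
/-- `Γ` has a presentation with `k` generators and at most `l` relators:
a surjection from the free group of rank `k` whose kernel is the normal
closure of a set of at most `l` elements. -/
def HasPresentationCard (Γ : Type*) [Group Γ] (k l : ℕ) : Prop :=
  ∃ φ : FreeGroup (Fin k) →* Γ, Function.Surjective φ ∧
    ∃ R : Set (FreeGroup (Fin k)), R.Finite ∧ R.ncard ≤ l ∧
      φ.ker = Subgroup.normalClosure R

/-- `Γ` is finitely presented. -/
def FinitelyPresented (Γ : Type*) [Group Γ] : Prop :=
  ∃ k l, HasPresentationCard Γ k l

/-- `d(Γ)`: the minimal cardinality of a (finite) generating set of `Γ`. -/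
noncomputable def dGen (Γ : Type*) [Group Γ] : ℕ :=
  sInf {d | ∃ S : Set Γ, S.Finite ∧ S.ncard = d ∧ Subgroup.closure S = ⊤}

/-- `ρ(Γ)`: the minimal number of relators among all finite presentations of `Γ`. -/
noncomputable def rho (Γ : Type*) [Group Γ] : ℕ :=
  sInf {l | ∃ k, HasPresentationCard Γ k l}

/-- The kernel `R` of the canonical presentation of `G` by the free group on
the underlying set of `G`. -/
abbrev freeKernel (G : Type*) [Group G] : Subgroup (FreeGroup G) :=
  (FreeGroup.lift (id : G → G)).ker

/-- `H₂(G,ℤ)`, presented via Hopf's formula `H₂(G,ℤ) ≅ (R ⊓ [F,F]) / [F,R]`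
applied to the canonical free presentation `1 → R → F → G → 1` with `F` the
free group on the underlying set of `G`. -/
abbrev H2 (G : Type*) [Group G] : Type _ :=
  ↥(freeKernel G ⊓ commutator (FreeGroup G)) ⧸
    (⁅(⊤ : Subgroup (FreeGroup G)), freeKernel G⁆.subgroupOf
      (freeKernel G ⊓ commutator (FreeGroup G)))

open scoped commutatorElement

/-- The relator set defining the universal central extension `G̃` of the
perfect group `G = ⟨X ∣ R⟩`: relators `x⁻¹ c_x` for `x ∈ X` and `[r, x]`
for `r ∈ R`, `x ∈ X`. -/
def tildeRels {X : Type*} (R : Set (FreeGroup X)) (c : X → FreeGroup X) :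
    Set (FreeGroup X) :=
  (Set.range fun x : X => (FreeGroup.of x)⁻¹ * c x) ∪
    {w | ∃ r ∈ R, ∃ x : X, w = ⁅r, FreeGroup.of x⁆}

universe u v

namespace UCEaux

open Subgroup

variable {X : Type u} (R : Set (FreeGroup X)) (c : X → FreeGroup X)

theorem mk_eq_one_iff {rels : Set (FreeGroup X)} (w : FreeGroup X) :
    PresentedGroup.mk rels w = 1 ↔ w ∈ Subgroup.normalClosure rels :=
  QuotientGroup.eq_one_iff w

theorem mk_eq_mk_iff {rels : Set (FreeGroup X)} (a b : FreeGroup X) :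
    PresentedGroup.mk rels a = PresentedGroup.mk rels b ↔
      a⁻¹ * b ∈ Subgroup.normalClosure rels :=
  QuotientGroup.eq

theorem tilde_subset_N (hcN : ∀ x, (FreeGroup.of x)⁻¹ * c x ∈ Subgroup.normalClosure R) :
    tildeRels R c ⊆ ↑(Subgroup.normalClosure R) := by
  rintro w (⟨x, rfl⟩ | ⟨r, hr, x, rfl⟩)
  · exact hcN x
  · have hrN : r ∈ Subgroup.normalClosure R := subset_normalClosure hr
    have h1 : FreeGroup.of x * r⁻¹ * (FreeGroup.of x)⁻¹ ∈ Subgroup.normalClosure R :=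
      Subgroup.Normal.conj_mem inferInstance _ (inv_mem hrN) _
    have h2 : ⁅r, FreeGroup.of x⁆ = r * (FreeGroup.of x * r⁻¹ * (FreeGroup.of x)⁻¹) := by
      group
    rw [SetLike.mem_coe, h2]
    exact mul_mem hrN h1

theorem lift_of_eq_mk :
    FreeGroup.lift (fun x => (PresentedGroup.of x : PresentedGroup R)) = PresentedGroup.mk R :=
  FreeGroup.ext_hom _ _ fun x => by rw [FreeGroup.lift_apply_of]; rfl

theorem pi_rels (hcN : ∀ x, (FreeGroup.of x)⁻¹ * c x ∈ Subgroup.normalClosure R) :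
    ∀ r ∈ tildeRels R c,
      FreeGroup.lift (fun x => (PresentedGroup.of x : PresentedGroup R)) r = 1 := by
  intro r hr
  rw [lift_of_eq_mk, mk_eq_one_iff]
  exact tilde_subset_N R c hcN hr

variable (π : PresentedGroup (tildeRels R c) →* PresentedGroup R)

theorem pi_comp_mk (hof : ∀ x, π (PresentedGroup.of x) = PresentedGroup.of x) :
    ∀ w, π (PresentedGroup.mk (tildeRels R c) w) = PresentedGroup.mk R w := by
  have h : π.comp (PresentedGroup.mk (tildeRels R c)) = PresentedGroup.mk R :=
    FreeGroup.ext_hom _ _ fun x => hof x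
  exact fun w => DFunLike.congr_fun h w

theorem mem_ker_iff (hof : ∀ x, π (PresentedGroup.of x) = PresentedGroup.of x) (w : FreeGroup X) :
    PresentedGroup.mk (tildeRels R c) w ∈ π.ker ↔ w ∈ Subgroup.normalClosure R := by
  rw [MonoidHom.mem_ker, pi_comp_mk R c π hof, mk_eq_one_iff]

theorem uce_surj (hof : ∀ x, π (PresentedGroup.of x) = PresentedGroup.of x) :
    Function.Surjective π := by
  intro g
  obtain ⟨w, rfl⟩ := PresentedGroup.mk_surjective R g
  exact ⟨PresentedGroup.mk _ w, pi_comp_mk R c π hof w⟩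

theorem mk_N_central (n : FreeGroup X) (hn : n ∈ Subgroup.normalClosure R) :
    PresentedGroup.mk (tildeRels R c) n ∈ Subgroup.center (PresentedGroup (tildeRels R c)) := by
  have hR : ∀ r ∈ R, PresentedGroup.mk (tildeRels R c) r ∈
      Subgroup.center (PresentedGroup (tildeRels R c)) := by
    intro r hr
    rw [Subgroup.mem_center_iff]
    intro g
    induction g using PresentedGroup.induction_on with
    | _ w =>
      have key : Commute (PresentedGroup.mk (tildeRels R c) r) (PresentedGroup.mk _ w) := by
        induction w using FreeGroup.induction_on with
        | C1 => exact Commute.one_right _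
        | of x =>
          have h1 : PresentedGroup.mk (tildeRels R c) ⁅r, FreeGroup.of x⁆ = 1 :=
            (mk_eq_one_iff _).mpr (subset_normalClosure (Or.inr ⟨r, hr, x, rfl⟩))
          rw [map_commutatorElement] at h1
          exact commutatorElement_eq_one_iff_commute.mp h1
        | inv_of x ih => rw [map_inv]; exact ih.inv_right
        | mul u v ihu ihv => rw [map_mul]; exact ihu.mul_right ihv
      exact key.symm.eq
  have hle : Subgroup.normalClosure R ≤
      (Subgroup.center (PresentedGroup (tildeRels R c))).comap
        (PresentedGroup.mk (tildeRels R c)) :=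
    Subgroup.normalClosure_le_normal fun r hr => Subgroup.mem_comap.mpr (hR r hr)
  exact Subgroup.mem_comap.mp (hle hn)

theorem uce_central (hof : ∀ x, π (PresentedGroup.of x) = PresentedGroup.of x) :
    π.ker ≤ Subgroup.center (PresentedGroup (tildeRels R c)) := by
  intro g hg
  induction g using PresentedGroup.induction_on with
  | _ w => exact mk_N_central R c w ((mem_ker_iff R c π hof w).mp hg)

theorem KM : ⁅(⊤ : Subgroup (FreeGroup X)), Subgroup.normalClosure R⁆ ≤
    Subgroup.normalClosure (tildeRels R c) := by
  rw [Subgroup.commutator_le]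
  intro f _ n hn
  rw [← mk_eq_one_iff (rels := tildeRels R c), map_commutatorElement]
  exact commutatorElement_eq_one_iff_mul_comm.mpr
    (Subgroup.mem_center_iff.mp (mk_N_central R c n hn) _)

theorem tilde_perfect (hc : ∀ x, c x ∈ commutator (FreeGroup X)) :
    commutator (PresentedGroup (tildeRels R c)) = ⊤ := by
  rw [eq_top_iff, ← PresentedGroup.closure_range_of (tildeRels R c), Subgroup.closure_le]
  rintro g ⟨x, rfl⟩
  have h1 : (PresentedGroup.of x : PresentedGroup (tildeRels R c)) =
      PresentedGroup.mk _ (c x) := by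
    rw [show (PresentedGroup.of x : PresentedGroup (tildeRels R c)) =
      PresentedGroup.mk _ (FreeGroup.of x) from rfl, mk_eq_mk_iff]
    exact subset_normalClosure (Or.inl ⟨x, rfl⟩)
  rw [SetLike.mem_coe, h1]
  have h2 : PresentedGroup.mk (tildeRels R c) (c x) ∈
      Subgroup.map (PresentedGroup.mk (tildeRels R c)) (commutator (FreeGroup X)) :=
    Subgroup.mem_map_of_mem _ (hc x)
  rw [commutator_def, Subgroup.map_commutator] at h2
  exact Subgroup.commutator_mono le_top le_top h2

end UCEaux

namespace UCEaux

open Subgroup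

variable {X : Type u} (R : Set (FreeGroup X)) (c : X → FreeGroup X)

theorem uce_univ (hc : ∀ x, c x ∈ commutator (FreeGroup X))
    (hcN : ∀ x, (FreeGroup.of x)⁻¹ * c x ∈ Subgroup.normalClosure R)
    (π : PresentedGroup (tildeRels R c) →* PresentedGroup R)
    (hof : ∀ x, π (PresentedGroup.of x) = PresentedGroup.of x)
    (E : Type v) [Group E] (p : E →* PresentedGroup R)
    (hp : Function.Surjective p) (hpc : p.ker ≤ Subgroup.center E) :
    ∃! f : PresentedGroup (tildeRels R c) →* E, p.comp f = π := by
  classical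
  choose s hs using hp
  set ψ : FreeGroup X →* E := FreeGroup.lift (fun x => s (PresentedGroup.of x)) with hψdef
  have hpψ : ∀ w, p (ψ w) = PresentedGroup.mk R w := by
    have h : p.comp ψ = PresentedGroup.mk R := by
      refine FreeGroup.ext_hom _ _ fun x => ?_
      show p (ψ (FreeGroup.of x)) = PresentedGroup.mk R (FreeGroup.of x)
      rw [hψdef, FreeGroup.lift_apply_of, hs]
      rfl
    exact fun w => DFunLike.congr_fun h w
  have hψker : ∀ w ∈ Subgroup.normalClosure R, ψ w ∈ p.ker := by
    intro w hw
    rw [MonoidHom.mem_ker, hpψ, mk_eq_one_iff]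
    exact hw
  set τ : FreeGroup X →* E := FreeGroup.lift (fun x => (ψ (FreeGroup.of x))⁻¹ * ψ (c x))
    with hτdef
  have hτof : ∀ x, τ (FreeGroup.of x) = ψ ((FreeGroup.of x)⁻¹ * c x) := by
    intro x
    rw [map_mul, map_inv, hτdef, FreeGroup.lift_apply_of]
  have hτcent : ∀ w, τ w ∈ Subgroup.center E := by
    intro w
    induction w using FreeGroup.induction_on with
    | C1 => rw [map_one]; exact one_mem _
    | of x =>
      show τ (FreeGroup.of x) ∈ _
      rw [hτof]
      exact hpc (hψker _ (hcN x))
    | inv_of x ih => rw [map_inv]; exact inv_mem ih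
    | mul u v hu hv => rw [map_mul]; exact mul_mem hu hv
  have hkey : ∀ w, ψ (FreeGroup.lift c w) = ψ w * τ w := by
    intro w
    induction w using FreeGroup.induction_on with
    | C1 => simp
    | of x =>
      show ψ (FreeGroup.lift c (FreeGroup.of x)) = ψ (FreeGroup.of x) * τ (FreeGroup.of x)
      rw [FreeGroup.lift_apply_of, hτof, map_mul, map_inv, mul_inv_cancel_left]
    | inv_of x ih =>
      show ψ (FreeGroup.lift c (FreeGroup.of x)⁻¹) =
        ψ ((FreeGroup.of x)⁻¹) * τ ((FreeGroup.of x)⁻¹)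
      have ih' : ψ (FreeGroup.lift c (FreeGroup.of x)) =
          ψ (FreeGroup.of x) * τ (FreeGroup.of x) := ih
      rw [map_inv, map_inv, ih', mul_inv_rev, map_inv, map_inv]
      exact (Subgroup.mem_center_iff.mp (inv_mem (hτcent (FreeGroup.of x))) _).symm
    | mul u v hu hv =>
      rw [map_mul, map_mul, hu, hv, map_mul, map_mul]
      calc ψ u * τ u * (ψ v * τ v) = ψ u * (τ u * ψ v) * τ v := by group
        _ = ψ u * (ψ v * τ u) * τ v := by
            rw [Subgroup.mem_center_iff.mp (hτcent u) (ψ v)]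
        _ = ψ u * ψ v * (τ u * τ v) := by group
  have hτcommutator : ∀ w ∈ commutator (FreeGroup X), τ w = 1 := by
    have hle : commutator (FreeGroup X) ≤ τ.ker := by
      rw [_root_.commutator_def, Subgroup.commutator_le]
      intro a _ b _
      rw [MonoidHom.mem_ker, map_commutatorElement]
      exact commutatorElement_eq_one_iff_mul_comm.mpr
        (Subgroup.mem_center_iff.mp (hτcent b) (τ a))
    exact fun w hw => hle hw
  have hl : FreeGroup.lift (fun x => ψ (c x)) = ψ.comp (FreeGroup.lift c) :=
    FreeGroup.ext_hom _ _ fun x => by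
      rw [FreeGroup.lift_apply_of, MonoidHom.comp_apply, FreeGroup.lift_apply_of]
  have hrels : ∀ r ∈ tildeRels R c, FreeGroup.lift (fun x => ψ (c x)) r = 1 := by
    rw [hl]
    rintro r (⟨x, rfl⟩ | ⟨r, hr, x, rfl⟩)
    · show ψ (FreeGroup.lift c ((FreeGroup.of x)⁻¹ * c x)) = 1
      rw [hkey, ← hτof x, map_mul, map_inv, hτcommutator _ (hc x), mul_one,
        mul_inv_cancel]
    · show ψ (FreeGroup.lift c ⁅r, FreeGroup.of x⁆) = 1
      rw [hkey,
        hτcommutator _ (Subgroup.commutator_mem_commutator (Subgroup.mem_top _)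
          (Subgroup.mem_top _)),
        mul_one, map_commutatorElement]
      exact commutatorElement_eq_one_iff_mul_comm.mpr
        (Subgroup.mem_center_iff.mp (hpc (hψker r (Subgroup.subset_normalClosure hr))) _).symm
  have hcomp : p.comp (PresentedGroup.toGroup hrels) = π := by
    apply PresentedGroup.ext
    intro x
    show p (PresentedGroup.toGroup hrels (PresentedGroup.of x)) = π (PresentedGroup.of x)
    rw [PresentedGroup.toGroup.of, hpψ, hof]
    show PresentedGroup.mk R (c x) = PresentedGroup.mk R (FreeGroup.of x)
    rw [mk_eq_mk_iff]
    have h6 := inv_mem (hcN x)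
    rwa [mul_inv_rev, inv_inv] at h6
  refine ⟨PresentedGroup.toGroup hrels, hcomp, ?_⟩
  intro f₁ hf₁
  set f₂ := PresentedGroup.toGroup hrels with hf₂def
  have hδker : ∀ g, f₁ g * (f₂ g)⁻¹ ∈ p.ker := by
    intro g
    rw [MonoidHom.mem_ker, map_mul, map_inv,
      show p (f₁ g) = π g from DFunLike.congr_fun hf₁ g,
      show p (f₂ g) = π g from DFunLike.congr_fun hcomp g, mul_inv_cancel]
  set δ : PresentedGroup (tildeRels R c) →* E :=
    { toFun := fun g => f₁ g * (f₂ g)⁻¹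
      map_one' := by simp
      map_mul' := by
        intro a b
        have hb := Subgroup.mem_center_iff.mp (hpc (hδker b))
        show f₁ (a * b) * (f₂ (a * b))⁻¹ = f₁ a * (f₂ a)⁻¹ * (f₁ b * (f₂ b)⁻¹)
        rw [map_mul, map_mul, mul_inv_rev]
        calc f₁ a * f₁ b * ((f₂ b)⁻¹ * (f₂ a)⁻¹)
            = f₁ a * (f₁ b * (f₂ b)⁻¹ * (f₂ a)⁻¹) := by group
          _ = f₁ a * ((f₂ a)⁻¹ * (f₁ b * (f₂ b)⁻¹)) := by rw [← hb ((f₂ a)⁻¹)]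
          _ = f₁ a * (f₂ a)⁻¹ * (f₁ b * (f₂ b)⁻¹) := by group } with hδdef
  have hδ1 : ∀ g, δ g = 1 := by
    have hle : commutator (PresentedGroup (tildeRels R c)) ≤ δ.ker := by
      rw [_root_.commutator_def, Subgroup.commutator_le]
      intro a _ b _
      rw [MonoidHom.mem_ker, map_commutatorElement]
      exact commutatorElement_eq_one_iff_mul_comm.mpr
        (Subgroup.mem_center_iff.mp (hpc (hδker b)) (δ a))
    intro g
    exact hle (by rw [tilde_perfect R c hc]; trivial)
  refine MonoidHom.ext fun g => ?_
  have h7 := hδ1 g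
  have h8 : f₁ g * (f₂ g)⁻¹ = 1 := h7
  rw [mul_inv_eq_one] at h8
  exact h8

end UCEaux

namespace UCEaux

open Subgroup

variable {X : Type u} (R : Set (FreeGroup X)) (c : X → FreeGroup X)

open scoped IsMulCommutative in
theorem uce_ker (hc : ∀ x, c x ∈ commutator (FreeGroup X))
    (hcN : ∀ x, (FreeGroup.of x)⁻¹ * c x ∈ Subgroup.normalClosure R)
    (π : PresentedGroup (tildeRels R c) →* PresentedGroup R)
    (hof : ∀ x, π (PresentedGroup.of x) = PresentedGroup.of x) :
    ∀ (N' : Subgroup (FreeGroup X)) [N'.Normal], Subgroup.normalClosure R = N' →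
      Nonempty (π.ker ≃* (↥(N' ⊓ commutator (FreeGroup X)) ⧸
        ((⁅(⊤ : Subgroup (FreeGroup X)), N'⁆).subgroupOf
          (N' ⊓ commutator (FreeGroup X))))) := by
  intro N' _ hN'
  subst hN'
  -- notation
  set N := Subgroup.normalClosure R with hNdef
  set M := Subgroup.normalClosure (tildeRels R c) with hMdef
  have hMN : M ≤ N := Subgroup.normalClosure_le_normal (tilde_subset_N R c hcN)
  have hKM : ⁅(⊤ : Subgroup (FreeGroup X)), N⁆ ≤ M := KM R c
  -- the substitution homomorphism θ
  have hθcomm : ∀ w, FreeGroup.lift c w ∈ commutator (FreeGroup X) := by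
    intro w
    induction w using FreeGroup.induction_on with
    | C1 => rw [map_one]; exact one_mem _
    | of x =>
      show FreeGroup.lift c (FreeGroup.of x) ∈ _
      rw [FreeGroup.lift_apply_of]; exact hc x
    | inv_of x ih => rw [map_inv]; exact inv_mem ih
    | mul u v hu hv => rw [map_mul]; exact mul_mem hu hv
  have hθM : ∀ w, w⁻¹ * FreeGroup.lift c w ∈ M := by
    intro w
    induction w using FreeGroup.induction_on with
    | C1 => simpa using one_mem M
    | of x =>
      show (FreeGroup.of x)⁻¹ * FreeGroup.lift c (FreeGroup.of x) ∈ M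
      rw [FreeGroup.lift_apply_of]
      exact Subgroup.subset_normalClosure (Or.inl ⟨x, rfl⟩)
    | inv_of x ih =>
      have hx : (FreeGroup.of x)⁻¹ * c x ∈ M :=
        Subgroup.subset_normalClosure (Or.inl ⟨x, rfl⟩)
      have h1 : ((FreeGroup.of x)⁻¹)⁻¹ * FreeGroup.lift c ((FreeGroup.of x)⁻¹) =
          FreeGroup.of x * ((FreeGroup.of x)⁻¹ * c x)⁻¹ * (FreeGroup.of x)⁻¹ := by
        rw [map_inv, FreeGroup.lift_apply_of]; group
      show ((FreeGroup.of x)⁻¹)⁻¹ * FreeGroup.lift c ((FreeGroup.of x)⁻¹) ∈ M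
      rw [h1]
      exact Subgroup.Normal.conj_mem inferInstance _ (inv_mem hx) _
    | mul u v hu hv =>
      have h2 : (u * v)⁻¹ * FreeGroup.lift c (u * v) =
          (v⁻¹ * (u⁻¹ * FreeGroup.lift c u) * (v⁻¹)⁻¹) * (v⁻¹ * FreeGroup.lift c v) := by
        rw [map_mul]; group
      rw [h2]
      exact mul_mem (Subgroup.Normal.conj_mem inferInstance _ hu _) hv
  -- the hard inclusion `M ⊓ [F,F] ≤ [F,N]`
  have hMcap : ∀ v, v ∈ M → v ∈ commutator (FreeGroup X) →
      v ∈ ⁅(⊤ : Subgroup (FreeGroup X)), N⁆ := by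
    intro v hvM hvc
    set K := ⁅(⊤ : Subgroup (FreeGroup X)), N⁆ with hKdef
    set q := QuotientGroup.mk' K with hqdef
    have hqcent : ∀ x : X, q ((FreeGroup.of x)⁻¹ * c x) ∈ Subgroup.center (FreeGroup X ⧸ K) := by
      intro x
      rw [Subgroup.mem_center_iff]
      intro h
      induction h using QuotientGroup.induction_on with
      | _ w =>
        have h1 : ⁅w, (FreeGroup.of x)⁻¹ * c x⁆ ∈ K :=
          Subgroup.commutator_mem_commutator (Subgroup.mem_top w) (hcN x)
        have h2 : q ⁅w, (FreeGroup.of x)⁻¹ * c x⁆ = 1 := (QuotientGroup.eq_one_iff _).mpr h1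
        rw [map_commutatorElement] at h2
        exact commutatorElement_eq_one_iff_mul_comm.mp h2
    set Ub := Subgroup.closure (Set.range fun x : X => q ((FreeGroup.of x)⁻¹ * c x)) with hUdef
    have hUcent : Ub ≤ Subgroup.center (FreeGroup X ⧸ K) :=
      (Subgroup.closure_le _).mpr (by rintro _ ⟨x, rfl⟩; exact hqcent x)
    haveI instU : Ub.Normal := by
      constructor
      intro n hn g
      have h3 := Subgroup.mem_center_iff.mp (hUcent hn) g
      rw [h3, mul_assoc, mul_inv_cancel, mul_one]
      exact hn
    have hMW : M ≤ Ub.comap q := by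
      apply Subgroup.normalClosure_le_normal
      rintro w (⟨x, rfl⟩ | ⟨r, hr, x, rfl⟩)
      · exact Subgroup.mem_comap.mpr (Subgroup.subset_closure ⟨x, rfl⟩)
      · have h4 : ⁅r, FreeGroup.of x⁆ ∈ ⁅N, (⊤ : Subgroup (FreeGroup X))⁆ :=
          Subgroup.commutator_mem_commutator (Subgroup.subset_normalClosure hr)
            (Subgroup.mem_top _)
        rw [Subgroup.commutator_comm] at h4
        have h5 : q ⁅r, FreeGroup.of x⁆ = 1 := (QuotientGroup.eq_one_iff _).mpr h4
        exact Subgroup.mem_comap.mpr (h5 ▸ one_mem Ub)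
    -- abelianized retraction
    have hKcomm : K ≤ commutator (FreeGroup X) := Subgroup.commutator_mono le_rfl le_top
    have haK : ∀ w ∈ K, (Abelianization.of w : Abelianization (FreeGroup X)) = 1 := by
      intro w hw
      exact MonoidHom.mem_ker.mp (Abelianization.commutator_subset_ker _ (hKcomm hw))
    set abar : FreeGroup X ⧸ K →* Abelianization (FreeGroup X) :=
      QuotientGroup.lift K Abelianization.of haK with habardef
    set γ : FreeGroup X →* ↥(Subgroup.center (FreeGroup X ⧸ K)) :=
      FreeGroup.lift (fun x =>
        (⟨q ((FreeGroup.of x)⁻¹ * c x), hqcent x⟩ :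
          ↥(Subgroup.center (FreeGroup X ⧸ K)))⁻¹) with hγdef
    set β : Abelianization (FreeGroup X) →* FreeGroup X ⧸ K :=
      (Subgroup.center (FreeGroup X ⧸ K)).subtype.comp (Abelianization.lift γ) with hβdef
    have hβa : ∀ w : FreeGroup X, β (Abelianization.of w) = ↑(γ w) := by
      intro w
      rw [hβdef, MonoidHom.comp_apply, Abelianization.lift_apply_of]
      rfl
    have hret : ∀ h ∈ Ub, β (abar h) = h := by
      intro h hh
      refine Subgroup.closure_induction ?_ ?_ ?_ ?_ hh
      · rintro _ ⟨x, rfl⟩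
        have h6 : abar (q ((FreeGroup.of x)⁻¹ * c x)) =
            Abelianization.of ((FreeGroup.of x)⁻¹ * c x) := rfl
        rw [h6, map_mul, map_inv,
          MonoidHom.mem_ker.mp (Abelianization.commutator_subset_ker _ (hc x)), mul_one,
          map_inv, hβa]
        rw [hγdef, FreeGroup.lift_apply_of]
        simp
        exact inv_inv _
      · simp
      · intro a b _ _ ha hb
        rw [map_mul, map_mul, ha, hb]
      · intro a _ ha
        rw [map_inv, map_inv, ha]
    have hq : q v ∈ Ub := Subgroup.mem_comap.mp (hMW hvM)
    have h7 : abar (q v) = Abelianization.of v := rfl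
    have h8 : (Abelianization.of v : Abelianization (FreeGroup X)) = 1 :=
      MonoidHom.mem_ker.mp (Abelianization.commutator_subset_ker _ hvc)
    have h9 : q v = 1 := by
      rw [← hret _ hq, h7, h8, map_one]
    exact (QuotientGroup.eq_one_iff v).mp h9
  -- the comparison homomorphism Φ
  have hsubmem : ∀ v : ↥(N ⊓ commutator (FreeGroup X)),
      PresentedGroup.mk (tildeRels R c) ↑v ∈ π.ker :=
    fun v => (mem_ker_iff R c π hof _).mpr v.2.1
  set Φ : ↥(N ⊓ commutator (FreeGroup X)) →* ↥π.ker :=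
    ((PresentedGroup.mk (tildeRels R c)).comp
      (N ⊓ commutator (FreeGroup X)).subtype).codRestrict π.ker hsubmem with hΦdef
  have hΦval : ∀ v : ↥(N ⊓ commutator (FreeGroup X)),
      (Φ v : PresentedGroup (tildeRels R c)) = PresentedGroup.mk (tildeRels R c) ↑v :=
    fun v => rfl
  have hΦsurj : Function.Surjective Φ := by
    rintro ⟨g, hg⟩
    obtain ⟨w, rfl⟩ := PresentedGroup.mk_surjective (tildeRels R c) g
    have hwN : w ∈ N := (mem_ker_iff R c π hof w).mp hg
    have hθN : FreeGroup.lift c w ∈ N := by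
      have h10 : FreeGroup.lift c w = w * (w⁻¹ * FreeGroup.lift c w) := by group
      rw [h10]
      exact mul_mem hwN (hMN (hθM w))
    refine ⟨⟨FreeGroup.lift c w, hθN, hθcomm w⟩, ?_⟩
    apply Subtype.ext
    rw [hΦval]
    show PresentedGroup.mk (tildeRels R c) (FreeGroup.lift c w) =
      PresentedGroup.mk (tildeRels R c) w
    rw [mk_eq_mk_iff]
    have h11 := inv_mem (hθM w)
    rwa [mul_inv_rev, inv_inv] at h11
  have hΦker : Φ.ker = (⁅(⊤ : Subgroup (FreeGroup X)), N⁆).subgroupOf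
      (N ⊓ commutator (FreeGroup X)) := by
    ext v
    rw [MonoidHom.mem_ker, Subgroup.mem_subgroupOf]
    constructor
    · intro hv
      have h12 : PresentedGroup.mk (tildeRels R c) ↑v = 1 := by
        rw [← hΦval v, hv]; rfl
      exact hMcap _ ((mk_eq_one_iff _).mp h12) v.2.2
    · intro hv
      apply Subtype.ext
      rw [hΦval]
      show PresentedGroup.mk (tildeRels R c) ↑v = 1
      exact (mk_eq_one_iff _).mpr (hKM hv)
  exact ⟨((QuotientGroup.quotientMulEquivOfEq hΦker.symm).trans
    (QuotientGroup.quotientKerEquivOfSurjective Φ hΦsurj)).symm⟩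

end UCEaux

/-- Lemma 2.1 (`mb:karl`, Prop. 3.5): for a perfect group `G = ⟨X ∣ R⟩` and
words `c_x ∈ [F,F]` with `x = c_x` in `G`, the group
`G̃ = ⟨X ∣ x⁻¹c_x, [r,x] (r ∈ R, x ∈ X)⟩` is the universal central extension
of `G`: the identity on `X` extends uniquely to an epimorphism `π : G̃ → G`,
whose kernel is central and isomorphic to `H₂(G,ℤ)`, and which is universal
among central extensions of `G`. -/
theorem stmt_5 {X : Type u} (R : Set (FreeGroup X))
    (hperf : Subsingleton (Abelianization (PresentedGroup R)))
    (c : X → FreeGroup X)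
    (hc : ∀ x, c x ∈ commutator (FreeGroup X))
    (hcN : ∀ x, (FreeGroup.of x)⁻¹ * c x ∈ Subgroup.normalClosure R) :
    ∃ π : PresentedGroup (tildeRels R c) →* PresentedGroup R,
      (∀ x : X, π (PresentedGroup.of x) = PresentedGroup.of x) ∧
      (∀ π' : PresentedGroup (tildeRels R c) →* PresentedGroup R,
        (∀ x : X, π' (PresentedGroup.of x) = PresentedGroup.of x) → π' = π) ∧
      Function.Surjective π ∧
      π.ker ≤ Subgroup.center (PresentedGroup (tildeRels R c)) ∧
      Nonempty (π.ker ≃* H2 (PresentedGroup R)) ∧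
      (∀ (E : Type v) [Group E] (p : E →* PresentedGroup R),
        Function.Surjective p → p.ker ≤ Subgroup.center E →
          ∃! f : PresentedGroup (tildeRels R c) →* E, p.comp f = π) := by
  classical
  have hπrels := UCEaux.pi_rels R c hcN
  set π := PresentedGroup.toGroup hπrels with hπdef
  have hof : ∀ x, π (PresentedGroup.of x) = PresentedGroup.of x :=
    fun x => PresentedGroup.toGroup.of hπrels
  refine ⟨π, hof, fun π' h' => PresentedGroup.ext fun x => (h' x).trans (hof x).symm,
    UCEaux.uce_surj R c π hof, UCEaux.uce_central R c π hof, ?_,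
    fun E _ p hp hpc => UCEaux.uce_univ R c hc hcN π hof E p hp hpc⟩
  -- perfectness of `G`
  have hGperf : commutator (PresentedGroup R) = ⊤ := by
    rw [eq_top_iff]
    intro g _
    have h1 : (Abelianization.of g : Abelianization (PresentedGroup R)) =
        Abelianization.of (1 : PresentedGroup R) := Subsingleton.elim _ _
    rw [map_one] at h1
    exact (QuotientGroup.eq_one_iff g).mp h1
  -- the canonical presentation of `G`
  have hsurjid : Function.Surjective
      (FreeGroup.lift (id : PresentedGroup R → PresentedGroup R)) :=
    fun g => ⟨FreeGroup.of g, FreeGroup.lift_apply_of⟩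
  have hcan : ∀ g : PresentedGroup R, ∃ w,
      w ∈ commutator (FreeGroup (PresentedGroup R)) ∧
      FreeGroup.lift (id : PresentedGroup R → PresentedGroup R) w = g := by
    intro g
    have h3 : Subgroup.map (FreeGroup.lift (id : PresentedGroup R → PresentedGroup R)) ⊤ = ⊤ := by
      rw [← MonoidHom.range_eq_map]
      exact MonoidHom.range_eq_top.mpr hsurjid
    have h2 : g ∈ Subgroup.map (FreeGroup.lift (id : PresentedGroup R → PresentedGroup R))
        (commutator (FreeGroup (PresentedGroup R))) := by
      rw [_root_.commutator_def, Subgroup.map_commutator, h3, ← _root_.commutator_def, hGperf]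
      trivial
    obtain ⟨w, hw1, hw2⟩ := Subgroup.mem_map.mp h2
    exact ⟨w, hw1, hw2⟩
  choose c2 hc2comm hc2val using hcan
  set R2 : Set (FreeGroup (PresentedGroup R)) := ↑(freeKernel (PresentedGroup R)) with hR2def
  have hNC : Subgroup.normalClosure R2 = freeKernel (PresentedGroup R) :=
    Subgroup.normalClosure_eq_self _
  have hc2N : ∀ g : PresentedGroup R, (FreeGroup.of g)⁻¹ * c2 g ∈
      Subgroup.normalClosure R2 := by
    intro g
    rw [hNC]
    show FreeGroup.lift (id : PresentedGroup R → PresentedGroup R)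
      ((FreeGroup.of g)⁻¹ * c2 g) = 1
    rw [map_mul, map_inv, FreeGroup.lift_apply_of, hc2val]
    exact inv_mul_cancel g
  have hπ2rels := UCEaux.pi_rels R2 c2 hc2N
  set π2 := PresentedGroup.toGroup hπ2rels with hπ2def
  have hof2 : ∀ g, π2 (PresentedGroup.of g) = PresentedGroup.of g :=
    fun g => PresentedGroup.toGroup.of hπ2rels
  -- the isomorphism between the two presentations of `G`
  have hNC' : Subgroup.normalClosure R2 =
      (FreeGroup.lift (id : PresentedGroup R → PresentedGroup R)).ker := hNC
  set e0 : PresentedGroup R2 ≃* PresentedGroup R :=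
    (QuotientGroup.quotientMulEquivOfEq hNC').trans
      (QuotientGroup.quotientKerEquivOfSurjective _ hsurjid) with he0def
  -- comparison maps between the two universal central extensions
  have hpc2 : (e0.toMonoidHom.comp π2).ker ≤
      Subgroup.center (PresentedGroup (tildeRels R2 c2)) := by
    intro x hx
    have h5 : e0 (π2 x) = 1 := hx
    have h4 : π2 x = 1 := e0.injective (by rw [h5, map_one])
    exact UCEaux.uce_central R2 c2 π2 hof2 (MonoidHom.mem_ker.mpr h4)
  have hsurj2 : Function.Surjective (e0.toMonoidHom.comp π2) := by
    intro g
    obtain ⟨y, hy⟩ := UCEaux.uce_surj R2 c2 π2 hof2 (e0.symm g)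
    exact ⟨y, by show e0 (π2 y) = g; rw [hy]; simp⟩
  obtain ⟨f, hf, hfu⟩ :=
    UCEaux.uce_univ R c hc hcN π hof _ (e0.toMonoidHom.comp π2) hsurj2 hpc2
  have hpc1 : (e0.symm.toMonoidHom.comp π).ker ≤
      Subgroup.center (PresentedGroup (tildeRels R c)) := by
    intro x hx
    have h5 : e0.symm (π x) = 1 := hx
    have h4 : π x = 1 := e0.symm.injective (by rw [h5, map_one])
    exact UCEaux.uce_central R c π hof (MonoidHom.mem_ker.mpr h4)
  have hsurj1 : Function.Surjective (e0.symm.toMonoidHom.comp π) := by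
    intro g
    obtain ⟨y, hy⟩ := UCEaux.uce_surj R c π hof (e0 g)
    exact ⟨y, by show e0.symm (π y) = g; rw [hy]; simp⟩
  obtain ⟨g0, hg0, hg0u⟩ :=
    UCEaux.uce_univ R2 c2 hc2comm hc2N π2 hof2 _ (e0.symm.toMonoidHom.comp π) hsurj1 hpc1
  have hfval : ∀ a, e0 (π2 (f a)) = π a := fun a => DFunLike.congr_fun hf a
  have hg0val : ∀ b, e0.symm (π (g0 b)) = π2 b := fun b => DFunLike.congr_fun hg0 b
  obtain ⟨idf, hidf, hidfu⟩ := UCEaux.uce_univ R c hc hcN π hof _ π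
    (UCEaux.uce_surj R c π hof) (UCEaux.uce_central R c π hof)
  have hgf : g0.comp f = MonoidHom.id _ := by
    have h1 : π.comp (g0.comp f) = π := by
      refine MonoidHom.ext fun a => ?_
      show π (g0 (f a)) = π a
      have h6 := hg0val (f a)
      have h2 : π (g0 (f a)) = e0 (π2 (f a)) := by
        rw [← h6]; simp
      rw [h2, hfval]
    have hA := hidfu _ h1
    have hB := hidfu (MonoidHom.id _) (MonoidHom.comp_id π)
    rw [hA, ← hB]
  obtain ⟨idf2, hidf2, hidf2u⟩ := UCEaux.uce_univ R2 c2 hc2comm hc2N π2 hof2 _ π2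
    (UCEaux.uce_surj R2 c2 π2 hof2) (UCEaux.uce_central R2 c2 π2 hof2)
  have hfg : f.comp g0 = MonoidHom.id _ := by
    have h1 : π2.comp (f.comp g0) = π2 := by
      refine MonoidHom.ext fun b => ?_
      show π2 (f (g0 b)) = π2 b
      have h2 : π2 (f (g0 b)) = e0.symm (π (g0 b)) := by
        rw [← hfval (g0 b)]; simp
      rw [h2, hg0val]
    have hA := hidf2u _ h1
    have hB := hidf2u (MonoidHom.id _) (MonoidHom.comp_id π2)
    rw [hA, ← hB]
  -- the induced isomorphism of kernels
  have hker1 : ∀ x : ↥π.ker, f ↑x ∈ π2.ker := by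
    intro x
    rw [MonoidHom.mem_ker]
    apply e0.injective
    rw [hfval, map_one]
    exact MonoidHom.mem_ker.mp x.2
  have hker2 : ∀ y : ↥π2.ker, g0 ↑y ∈ π.ker := by
    intro y
    rw [MonoidHom.mem_ker]
    apply e0.symm.injective
    rw [hg0val, map_one]
    exact MonoidHom.mem_ker.mp y.2
  set eqv : ↥π.ker ≃* ↥π2.ker :=
    { toFun := fun x => ⟨f ↑x, hker1 x⟩
      invFun := fun y => ⟨g0 ↑y, hker2 y⟩
      left_inv := fun x => Subtype.ext
        (DFunLike.congr_fun hgf (↑x : PresentedGroup (tildeRels R c)))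
      right_inv := fun y => Subtype.ext
        (DFunLike.congr_fun hfg (↑y : PresentedGroup (tildeRels R2 c2)))
      map_mul' := fun a b => Subtype.ext (map_mul f _ _) } with heqvdef
  obtain ⟨iso2⟩ := UCEaux.uce_ker R2 c2 hc2comm hc2N π2 hof2
    (freeKernel (PresentedGroup R)) hNC
  exact ⟨eqv.trans iso2⟩
end

section
/- Let G be a perfect group presented as G = F/N, where F is the free group on a set X and N is the normal closure in F of a set R ⊆ F, and suppose H_2(G,ℤ) = 0. For each x ∈ X choose c_x ∈ [F,F] with x⁻¹c_x ∈ N. Then the group presented on the generating set X with relators {x⁻¹c_x : x ∈ X} ∪ {[r,x] : r ∈ R, x ∈ X} is isomorphic to G, via the homomorphism extending the identity map on X. -/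
open scoped commutatorElement

-- commutator with central multipliers
lemma central_commutator {G : Type*} [Group G] {z w : G}
    (hz : z ∈ Subgroup.center G) (hw : w ∈ Subgroup.center G) (u v : G) :
    ⁅z * u, w * v⁆ = ⁅u, v⁆ := by
  have hz1 : ∀ g : G, g * z = z * g := Subgroup.mem_center_iff.mp hz
  have hw1 : ∀ g : G, g * w = w * g := Subgroup.mem_center_iff.mp hw
  have cz : ∀ a : G, z * a * z⁻¹ = a := fun a => by rw [← hz1, mul_inv_cancel_right]
  have cw : ∀ a : G, w * a * w⁻¹ = a := fun a => by rw [← hw1, mul_inv_cancel_right]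
  calc ⁅z * u, w * v⁆
      = z * (u * (w * v) * u⁻¹) * z⁻¹ * (v⁻¹ * w⁻¹) := by group
    _ = u * (w * v) * u⁻¹ * (v⁻¹ * w⁻¹) := by rw [cz]
    _ = (u * w) * (v * u⁻¹ * v⁻¹) * w⁻¹ := by group
    _ = (w * u) * (v * u⁻¹ * v⁻¹) * w⁻¹ := by rw [hw1 u]
    _ = w * (u * v * u⁻¹ * v⁻¹) * w⁻¹ := by group
    _ = ⁅u, v⁆ := by rw [cw]; group

/-- If `G = ⟨X ∣ R⟩` is perfect and `H₂(G,ℤ) = 0`, then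
`⟨X ∣ x⁻¹c_x, [r,x] (r ∈ R, x ∈ X)⟩` is a presentation of `G`, via the
homomorphism extending the identity on `X`. -/
theorem stmt_6 {X : Type*} (R : Set (FreeGroup X))
    (hperf : Subsingleton (Abelianization (PresentedGroup R)))
    (hH2 : Subsingleton (H2 (PresentedGroup R)))
    (c : X → FreeGroup X)
    (hc : ∀ x, c x ∈ commutator (FreeGroup X))
    (hcN : ∀ x, (FreeGroup.of x)⁻¹ * c x ∈ Subgroup.normalClosure R) :
    ∃ e : PresentedGroup (tildeRels R c) ≃* PresentedGroup R,
      ∀ x : X, e (PresentedGroup.of x) = PresentedGroup.of x := by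
  classical
  set S := tildeRels R c with hS
  -- the map down to PresentedGroup R
  have hrels : ∀ r ∈ S, FreeGroup.lift (PresentedGroup.of (rels := R)) r = 1 := by
    have hlift : FreeGroup.lift (PresentedGroup.of (rels := R)) = PresentedGroup.mk R := by
      ext x; simp [PresentedGroup.of]
    rw [hlift]
    rintro r (⟨x, rfl⟩ | ⟨r, hr, x, rfl⟩)
    · exact (QuotientGroup.eq_one_iff _).2 (hcN x)
    · have h1 : PresentedGroup.mk R r = 1 :=
        (QuotientGroup.eq_one_iff _).2 (Subgroup.subset_normalClosure hr)
      rw [map_commutatorElement, h1]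
      simp
  let π : PresentedGroup S →* PresentedGroup R := PresentedGroup.toGroup hrels
  have hπof : ∀ x : X, π (PresentedGroup.of x) = PresentedGroup.of x := fun x =>
    PresentedGroup.toGroup.of hrels
  have hπmk : ∀ w : FreeGroup X, π (PresentedGroup.mk S w) = PresentedGroup.mk R w := by
    have : π.comp (PresentedGroup.mk S) = PresentedGroup.mk R := by
      ext x; exact hπof x
    intro w; exact DFunLike.congr_fun this w
  have hπsurj : Function.Surjective π := by
    intro g
    obtain ⟨w, rfl⟩ := PresentedGroup.mk_surjective R g
    exact ⟨PresentedGroup.mk S w, hπmk w⟩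
  -- images of R are central
  have hRc : ∀ r ∈ R, PresentedGroup.mk S r ∈ Subgroup.center (PresentedGroup S) := by
    intro r hr
    rw [Subgroup.mem_center_iff]
    intro g
    have hg : g ∈ Subgroup.centralizer {PresentedGroup.mk S r} := by
      refine PresentedGroup.generated_by S (Subgroup.centralizer {PresentedGroup.mk S r}) ?_ g
      intro x
      rw [Subgroup.mem_centralizer_iff]
      rintro h rfl
      have h1 : PresentedGroup.mk S ⁅r, FreeGroup.of x⁆ = 1 :=
        (QuotientGroup.eq_one_iff _).2
          (Subgroup.subset_normalClosure (Or.inr ⟨r, hr, x, rfl⟩))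
      rw [map_commutatorElement] at h1
      exact (commutatorElement_eq_one_iff_mul_comm.mp h1)
    exact (Subgroup.mem_centralizer_iff.mp hg _ rfl).symm
  have hNcen : Subgroup.normalClosure R ≤
      (Subgroup.center (PresentedGroup S)).comap (PresentedGroup.mk S) :=
    Subgroup.normalClosure_le_normal hRc
  have hkercen : ∀ g ∈ π.ker, g ∈ Subgroup.center (PresentedGroup S) := by
    intro g hg
    obtain ⟨w, rfl⟩ := PresentedGroup.mk_surjective S g
    have : w ∈ Subgroup.normalClosure R := by
      rw [← QuotientGroup.eq_one_iff (N := Subgroup.normalClosure R) w]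
      rw [MonoidHom.mem_ker, hπmk] at hg
      exact hg
    exact hNcen this
  -- PresentedGroup S is perfect
  have hofc : ∀ x : X, (PresentedGroup.of x : PresentedGroup S) = PresentedGroup.mk S (c x) := by
    intro x
    have h1 : PresentedGroup.mk S ((FreeGroup.of x)⁻¹ * c x) = 1 :=
      (QuotientGroup.eq_one_iff _).2 (Subgroup.subset_normalClosure (Or.inl ⟨x, rfl⟩))
    rw [map_mul, map_inv] at h1
    have := inv_mul_eq_one.mp h1
    exact this ▸ rfl
  have hmapcomm : Subgroup.map (PresentedGroup.mk S) (commutator (FreeGroup X)) ≤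
      commutator (PresentedGroup S) := by
    rw [commutator_def, commutator_def, Subgroup.map_commutator]
    exact Subgroup.commutator_mono le_top le_top
  have hperfS : commutator (PresentedGroup S) = ⊤ := by
    rw [eq_top_iff]
    intro g _
    refine PresentedGroup.generated_by S (commutator (PresentedGroup S)) ?_ g
    intro x
    rw [hofc x]
    exact hmapcomm ⟨c x, hc x, rfl⟩
  -- the lift from FreeGroup (PresentedGroup R)
  set G := PresentedGroup R with hG
  let s : G → PresentedGroup S := Function.surjInv hπsurj
  have hs : ∀ g : G, π (s g) = g := Function.surjInv_eq hπsurj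
  let φ : FreeGroup G →* PresentedGroup S := FreeGroup.lift s
  have hπφ : π.comp φ = FreeGroup.lift (id : G → G) := by
    ext g; simp [φ, hs]
  have hφker : ∀ w ∈ freeKernel G, φ w ∈ Subgroup.center (PresentedGroup S) := by
    intro w hw
    refine hkercen (φ w) ?_
    rw [MonoidHom.mem_ker]
    rw [MonoidHom.mem_ker] at hw
    calc π (φ w) = (π.comp φ) w := rfl
      _ = 1 := by rw [hπφ]; exact hw
  -- surjectivity of φ
  have hdecomp : ∀ g : PresentedGroup S, ∃ z w, z ∈ Subgroup.center (PresentedGroup S) ∧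
      g = z * φ w := by
    intro g
    refine ⟨g * (φ (FreeGroup.of (π g)))⁻¹, FreeGroup.of (π g), ?_, by group⟩
    refine hkercen _ ?_
    rw [MonoidHom.mem_ker, map_mul, map_inv]
    have : π (φ (FreeGroup.of (π g))) = π g := by
      calc π (φ (FreeGroup.of (π g))) = (π.comp φ) (FreeGroup.of (π g)) := rfl
        _ = π g := by rw [hπφ]; simp
    rw [this]; group
  have hφsurj : Function.Surjective φ := by
    have hrange : φ.range = ⊤ := by
      rw [eq_top_iff, ← hperfS, commutator_eq_closure, Subgroup.closure_le]
      rintro _ ⟨a, b, rfl⟩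
      obtain ⟨za, wa, hza, rfl⟩ := hdecomp a
      obtain ⟨zb, wb, hzb, rfl⟩ := hdecomp b
      rw [central_commutator hza hzb]
      exact ⟨⁅wa, wb⁆, by rw [map_commutatorElement]⟩
    intro g
    have : g ∈ φ.range := hrange ▸ Subgroup.mem_top g
    exact this
  -- φ kills ⁅⊤, freeKernel G⁆
  have hφkill : ∀ w ∈ ⁅(⊤ : Subgroup (FreeGroup G)), freeKernel G⁆, φ w = 1 := by
    intro w hw
    have h1 : Subgroup.map φ ⁅(⊤ : Subgroup (FreeGroup G)), freeKernel G⁆ ≤ ⊥ := by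
      rw [Subgroup.map_commutator, Subgroup.commutator_le]
      rintro g₁ _ _ ⟨w₂, hw₂, rfl⟩
      rw [Subgroup.mem_bot, commutatorElement_eq_one_iff_mul_comm]
      exact Subgroup.mem_center_iff.mp (hφker w₂ hw₂) g₁
    have : φ w ∈ Subgroup.map φ ⁅(⊤ : Subgroup (FreeGroup G)), freeKernel G⁆ := ⟨w, hw, rfl⟩
    simpa using h1 this
  -- injectivity of π
  have hπinj : Function.Injective π := by
    rw [← MonoidHom.ker_eq_bot_iff, eq_bot_iff]
    intro z hz
    -- z lies in the commutator subgroup = image of commutator of FreeGroup G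
    have hz' : z ∈ Subgroup.map φ (commutator (FreeGroup G)) := by
      rw [commutator, Subgroup.map_commutator, Subgroup.map_top_of_surjective φ hφsurj,
        ← commutator, hperfS]
      exact Subgroup.mem_top z
    obtain ⟨w, hwcomm, rfl⟩ := hz'
    have hwker : w ∈ freeKernel G := by
      rw [MonoidHom.mem_ker]
      rw [MonoidHom.mem_ker] at hz
      calc FreeGroup.lift (id : G → G) w = (π.comp φ) w := by rw [hπφ]
        _ = 1 := hz
    have hwmem : w ∈ freeKernel G ⊓ commutator (FreeGroup G) := ⟨hwker, hwcomm⟩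
    have hw2 : w ∈ ⁅(⊤ : Subgroup (FreeGroup G)), freeKernel G⁆ := by
      have h3 : ((⟨w, hwmem⟩ : ↥(freeKernel G ⊓ commutator (FreeGroup G))) :
          ↥(freeKernel G ⊓ commutator (FreeGroup G))) ∈
          (⁅(⊤ : Subgroup (FreeGroup G)), freeKernel G⁆.subgroupOf
            (freeKernel G ⊓ commutator (FreeGroup G))) := by
        rw [← QuotientGroup.eq_one_iff]
        exact Subsingleton.elim _ _
      exact Subgroup.mem_subgroupOf.mp h3
    rw [Subgroup.mem_bot]
    exact hφkill w hw2
  exact ⟨MulEquiv.ofBijective π ⟨hπinj, hπsurj⟩, hπof⟩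
end

section
/- Let G be a perfect group with d(G) = r. Then for every positive integer m, d(G^m) ≤ r·(1 + ⌈log₂(m+1)⌉). -/
open scoped commutatorElement

section Aux

/-- A bound on the number of generators. -/
def GenBound (Γ : Type*) [Group Γ] (n : ℕ) : Prop :=
  ∃ S : Set Γ, S.Finite ∧ S.ncard ≤ n ∧ Subgroup.closure S = ⊤

lemma genBound_of_surjective {A B : Type*} [Group A] [Group B] (φ : A →* B)
    (hφ : Function.Surjective φ) {n : ℕ} (h : GenBound A n) : GenBound B n := by
  obtain ⟨S, hfin, hcard, htop⟩ := h
  refine ⟨φ '' S, hfin.image _, le_trans (Set.ncard_image_le hfin) hcard, ?_⟩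
  rw [← MonoidHom.map_closure, htop]
  rwa [← MonoidHom.range_eq_map, MonoidHom.range_eq_top]

/-- The diagonal homomorphism. -/
def diagHom (G : Type*) [Group G] (k : ℕ) : G →* (Fin k → G) where
  toFun g := fun _ => g
  map_one' := rfl
  map_mul' _ _ := rfl

lemma mem_of_mulSingle_mem {G : Type*} [Group G] {k : ℕ} {H : Subgroup (Fin k → G)}
    (h : ∀ (c : Fin k) (g : G), Pi.mulSingle c g ∈ H) (f : Fin k → G) : f ∈ H := by
  classical
  have key : ∀ s : Finset (Fin k), (fun i => if i ∈ s then f i else 1) ∈ H := by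
    intro s
    induction s using Finset.induction_on with
    | empty => convert H.one_mem using 1; funext i; simp
    | insert _ _ ha ih =>
      rename_i a s
      have heq : (fun i => if i ∈ insert a s then f i else 1)
          = Pi.mulSingle a (f a) * fun i => if i ∈ s then f i else 1 := by
        funext i
        rcases eq_or_ne i a with rfl | hia
        · simp [ha]
        · simp [Finset.mem_insert, hia]
      rw [heq]
      exact H.mul_mem (h _ _) ih
  simpa using key Finset.univ

lemma N_top {G : Type*} [Group G] (hperf : commutator G = ⊤)
    {k : ℕ} {A : Set G} (hA : Subgroup.closure A = ⊤)
    {X : Set (Fin k → G)} (hX : Subgroup.closure X = ⊤)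
    (N : Subgroup (Fin k → G)) (hN : N.Normal)
    (hcomm : ∀ x ∈ X, ∀ a ∈ A, ⁅x, diagHom G k a⁆ ∈ N) : N = ⊤ := by
  classical
  let π := QuotientGroup.mk' N
  -- generators of X commute with diagonal generators, in the quotient
  have h1 : ∀ x ∈ X, ∀ a ∈ A, Commute (π x) (π (diagHom G k a)) := by
    intro x hx a ha
    rw [← commutatorElement_eq_one_iff_commute, ← map_commutatorElement]
    exact (QuotientGroup.eq_one_iff _).mpr (hcomm x hx a ha)
  -- everything commutes with diagonal generators in the quotient
  have h2 : ∀ a ∈ A, ∀ y : Fin k → G, Commute (π y) (π (diagHom G k a)) := by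
    intro a ha y
    have hle : Subgroup.closure X ≤
        Subgroup.comap π (Subgroup.centralizer {π (diagHom G k a)}) := by
      rw [Subgroup.closure_le]
      intro x hx
      simp only [SetLike.mem_coe, Subgroup.mem_comap, Subgroup.mem_centralizer_iff]
      intro h hh
      rw [Set.mem_singleton_iff] at hh
      subst hh
      exact (h1 x hx a ha).symm.eq
    have : y ∈ Subgroup.comap π (Subgroup.centralizer {π (diagHom G k a)}) :=
      hle (hX ▸ Subgroup.mem_top y)
    rw [Subgroup.mem_comap, Subgroup.mem_centralizer_iff] at this
    exact (this _ rfl).symm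
  -- whole diagonal is central in the quotient
  have h3 : ∀ (g : G) (y : Fin k → G), Commute (π y) (π (diagHom G k g)) := by
    intro g y
    have hle : Subgroup.closure A ≤
        Subgroup.comap (π.comp (diagHom G k)) (Subgroup.centralizer {π y}) := by
      rw [Subgroup.closure_le]
      intro a ha
      simp only [SetLike.mem_coe, Subgroup.mem_comap, Subgroup.mem_centralizer_iff,
        MonoidHom.comp_apply]
      intro h hh
      rw [Set.mem_singleton_iff] at hh
      subst hh
      exact (h2 a ha y).eq
    have : g ∈ Subgroup.comap (π.comp (diagHom G k)) (Subgroup.centralizer {π y}) :=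
      hle (hA ▸ Subgroup.mem_top g)
    rw [Subgroup.mem_comap, Subgroup.mem_centralizer_iff] at this
    exact this _ rfl
  -- each single-coordinate commutator lies in N
  have h4 : ∀ (c : Fin k) (g h : G), Pi.mulSingle c ⁅g, h⁆ ∈ N := by
    intro c g h
    set e : Fin k → G := (diagHom G k h)⁻¹ * Pi.mulSingle c h with he
    have hce : Commute (Pi.mulSingle c g) e := by
      show _ * _ = _ * _
      funext i
      rcases eq_or_ne i c with rfl | hic
      · simp [he, diagHom]
      · simp [he, diagHom, hic]
    have hσh : Pi.mulSingle c h = diagHom G k h * e := (mul_inv_cancel_left _ _).symm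
    have hc : Commute (π (Pi.mulSingle c g)) (π (Pi.mulSingle c h)) := by
      rw [hσh, map_mul]
      exact (h3 h _).mul_right (hce.map π)
    have h1' : π (Pi.mulSingle c ⁅g, h⁆) = 1 := by
      have hmap : (Pi.mulSingle c ⁅g, h⁆ : Fin k → G)
          = ⁅(Pi.mulSingle c g : Fin k → G), Pi.mulSingle c h⁆ :=
        map_commutatorElement (MonoidHom.mulSingle (fun _ : Fin k => G) c) g h
      rw [hmap, map_commutatorElement]
      exact commutatorElement_eq_one_iff_commute.mpr hc
    exact (QuotientGroup.eq_one_iff _).mp h1'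
  -- each single coordinate lies in N since G is perfect
  have h5 : ∀ (c : Fin k) (g : G), Pi.mulSingle c g ∈ N := by
    intro c g
    have hle : commutator G ≤
        Subgroup.comap (MonoidHom.mulSingle (fun _ : Fin k => G) c) N := by
      rw [commutator, Subgroup.commutator_le]
      intro p _ q _
      rw [Subgroup.mem_comap]
      show Pi.mulSingle c ⁅p, q⁆ ∈ N
      exact h4 c p q
    have hg := hle (hperf ▸ Subgroup.mem_top g)
    rw [Subgroup.mem_comap] at hg
    exact hg
  rw [eq_top_iff]
  intro f _
  exact mem_of_mulSingle_mem h5 f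

end Aux

section Step

variable {G : Type*} [Group G]

/-- y ↦ (1, y, 1) -/
def j2 (G : Type*) [Group G] (k : ℕ) :
    (Fin k → G) →* ((Fin k → G) × (Fin k → G) × G) :=
  (MonoidHom.inr _ _).comp (MonoidHom.inl _ G)

/-- The key step: `d(G^(2k+1)) ≤ d(G^k) + r` for perfect `G`. -/
lemma step (hperf : commutator G = ⊤) {r s k : ℕ}
    {A : Set G} (hAf : A.Finite) (hAc : A.ncard ≤ r) (hAt : Subgroup.closure A = ⊤)
    (h : GenBound (Fin k → G) s) :
    GenBound ((Fin k → G) × (Fin k → G) × G) (s + r) := by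
  classical
  obtain ⟨X, hXf, hXc, hXt⟩ := h
  set u : (Fin k → G) → ((Fin k → G) × (Fin k → G) × G) := fun x => (x, x, 1) with hu_def
  set v : G → ((Fin k → G) × (Fin k → G) × G) := fun a => (1, diagHom G k a, a) with hv_def
  refine ⟨u '' X ∪ v '' A, (hXf.image u).union (hAf.image v), ?_, ?_⟩
  · exact le_trans (Set.ncard_union_le _ _)
      (Nat.add_le_add (le_trans (Set.ncard_image_le hXf) hXc)
        (le_trans (Set.ncard_image_le hAf) hAc))
  set H := Subgroup.closure (u '' X ∪ v '' A) with hH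
  have hu : ∀ x ∈ X, u x ∈ H :=
    fun x hx => Subgroup.subset_closure (Or.inl ⟨x, hx, rfl⟩)
  have hv : ∀ a ∈ A, v a ∈ H :=
    fun a ha => Subgroup.subset_closure (Or.inr ⟨a, ha, rfl⟩)
  set N : Subgroup (Fin k → G) := Subgroup.comap (j2 G k) H with hN_def
  have hmemN : ∀ y, y ∈ N ↔ ((1, y, 1) : (Fin k → G) × (Fin k → G) × G) ∈ H :=
    fun y => Iff.rfl
  -- conjugation formula
  have hconj : ∀ (x y : Fin k → G),
      u x * (1, y, 1) * (u x)⁻¹ = ((1 : Fin k → G), x * y * x⁻¹, (1 : G)) := by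
    intro x y
    simp [hu_def, Prod.ext_iff, mul_assoc]
  have huinv : ∀ x : Fin k → G, (u x)⁻¹ = u x⁻¹ := by
    intro x; simp [hu_def, Prod.ext_iff]
  -- N is normal
  have hNnormal : N.Normal := by
    rw [← Subgroup.normalizer_eq_top_iff]
    rw [eq_top_iff, ← hXt, Subgroup.closure_le]
    intro x hx
    rw [SetLike.mem_coe, Subgroup.mem_normalizer_iff]
    intro y
    constructor
    · intro hy
      have : u x * (1, y, 1) * (u x)⁻¹ ∈ H :=
        H.mul_mem (H.mul_mem (hu x hx) ((hmemN y).mp hy)) (H.inv_mem (hu x hx))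
      rw [hconj] at this
      exact (hmemN _).mpr this
    · intro hy
      have hx' : u x⁻¹ ∈ H := huinv x ▸ H.inv_mem (hu x hx)
      have : u x⁻¹ * (1, x * y * x⁻¹, 1) * (u x⁻¹)⁻¹ ∈ H :=
        H.mul_mem (H.mul_mem hx' ((hmemN _).mp hy)) (H.inv_mem hx')
      rw [hconj] at this
      have heq : x⁻¹ * (x * y * x⁻¹) * x⁻¹⁻¹ = y := by group
      rw [heq] at this
      exact (hmemN y).mpr this
  -- commutator hypothesis
  have hcomm : ∀ x ∈ X, ∀ a ∈ A, ⁅x, diagHom G k a⁆ ∈ N := by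
    intro x hx a ha
    have hcm : ⁅u x, v a⁆ = ((1 : Fin k → G), ⁅x, diagHom G k a⁆, (1 : G)) := by
      simp [hu_def, hv_def, commutatorElement_def, Prod.ext_iff, mul_assoc]
    have : ⁅u x, v a⁆ ∈ H := H.mul_mem (H.mul_mem (H.mul_mem (hu x hx) (hv a ha))
      (H.inv_mem (hu x hx))) (H.inv_mem (hv a ha))
    rw [hcm] at this
    exact (hmemN _).mpr this
  have hNtop : N = ⊤ := N_top hperf hAt hXt N hNnormal hcomm
  have hmid : ∀ y : Fin k → G, ((1, y, 1) : (Fin k → G) × (Fin k → G) × G) ∈ H :=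
    fun y => (hmemN y).mp (hNtop ▸ Subgroup.mem_top y)
  -- first coordinate
  have hfst : ∀ y : Fin k → G, ((y, 1, 1) : (Fin k → G) × (Fin k → G) × G) ∈ H := by
    have hle : Subgroup.closure X ≤
        Subgroup.comap (MonoidHom.inl (Fin k → G) ((Fin k → G) × G)) H := by
      rw [Subgroup.closure_le]
      intro x hx
      rw [SetLike.mem_coe, Subgroup.mem_comap]
      have heq : (MonoidHom.inl (Fin k → G) ((Fin k → G) × G)) x = u x * (1, x⁻¹, 1) := by
        simp [hu_def, Prod.ext_iff]
      rw [heq]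
      exact H.mul_mem (hu x hx) (hmid x⁻¹)
    intro y
    exact hle (hXt ▸ Subgroup.mem_top y)
  -- third coordinate
  have hthd : ∀ g : G, ((1, 1, g) : (Fin k → G) × (Fin k → G) × G) ∈ H := by
    have hle : Subgroup.closure A ≤
        Subgroup.comap ((MonoidHom.inr (Fin k → G) ((Fin k → G) × G)).comp
          (MonoidHom.inr (Fin k → G) G)) H := by
      rw [Subgroup.closure_le]
      intro a ha
      rw [SetLike.mem_coe, Subgroup.mem_comap]
      have heq : ((MonoidHom.inr (Fin k → G) ((Fin k → G) × G)).comp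
          (MonoidHom.inr (Fin k → G) G)) a = v a * (1, (diagHom G k a)⁻¹, 1) := by
        simp [hv_def, Prod.ext_iff]
      rw [heq]
      exact H.mul_mem (hv a ha) (hmid _)
    intro g
    exact hle (hAt ▸ Subgroup.mem_top g)
  rw [eq_top_iff]
  rintro ⟨y, z, g⟩ -
  have heq : ((y, z, g) : (Fin k → G) × (Fin k → G) × G)
      = (y, 1, 1) * (1, z, 1) * (1, 1, g) := by
    simp [Prod.ext_iff]
  rw [heq]
  exact H.mul_mem (H.mul_mem (hfst y) (hmid z)) (hthd g)

end Step

section Transport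

variable {G : Type*} [Group G]

/-- append as homomorphism -/
def appendHom (G : Type*) [Group G] (p q : ℕ) :
    ((Fin p → G) × (Fin q → G)) →* (Fin (p + q) → G) where
  toFun yz := Fin.append yz.1 yz.2
  map_one' := by
    funext i
    cases i using Fin.addCases with
    | left i => simp [Fin.append_left]
    | right i => simp [Fin.append_right]
  map_mul' yz wv := by
    funext i
    cases i using Fin.addCases with
    | left i => simp [Fin.append_left]
    | right i => simp [Fin.append_right]

lemma appendHom_surj (p q : ℕ) : Function.Surjective (appendHom G p q) := by
  intro f
  refine ⟨(fun i => f (Fin.castAdd q i), fun i => f (Fin.natAdd p i)), ?_⟩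
  funext i
  cases i using Fin.addCases with
  | left i => simp [appendHom, Fin.append_left]
  | right i => simp [appendHom, Fin.append_right]

lemma diagHom_one_surj : Function.Surjective (diagHom G 1) := by
  intro f
  exact ⟨f 0, funext fun i => congrArg f (Subsingleton.elim 0 i)⟩

/-- restriction as homomorphism -/
def restrictHom (G : Type*) [Group G] {p q : ℕ} (h : p ≤ q) :
    (Fin q → G) →* (Fin p → G) where
  toFun f := f ∘ Fin.castLE h
  map_one' := rfl
  map_mul' _ _ := rfl

lemma restrictHom_surj {p q : ℕ} (h : p ≤ q) :
    Function.Surjective (restrictHom G h) := by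
  intro g
  refine ⟨fun i => if hi : (i : ℕ) < p then g ⟨i, hi⟩ else 1, ?_⟩
  funext i
  simp [restrictHom, Fin.castLE, i.isLt]

lemma pow_bound (hperf : commutator G = ⊤) {r : ℕ}
    {A : Set G} (hAf : A.Finite) (hAc : A.ncard ≤ r) (hAt : Subgroup.closure A = ⊤) :
    ∀ t, GenBound (Fin (2 ^ t - 1) → G) (r * t) := by
  intro t
  induction t with
  | zero =>
    have h0 : (2 : ℕ) ^ 0 - 1 = 0 := rfl
    rw [h0]
    refine ⟨∅, Set.finite_empty, by simp, ?_⟩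
    rw [eq_top_iff]
    intro f _
    have : f = 1 := Subsingleton.elim f 1
    rw [this]
    exact Subgroup.one_mem _
  | succ t ih =>
    have hstep := step hperf hAf hAc hAt ih
    set k := 2 ^ t - 1 with hk
    have hnested : Function.Surjective ((appendHom G k 1).comp
        ((MonoidHom.id (Fin k → G)).prodMap (diagHom G 1))) :=
      (appendHom_surj k 1).comp
        (Function.Surjective.prodMap Function.surjective_id diagHom_one_surj)
    have hψ : Function.Surjective ((appendHom G k (k + 1)).comp
        ((MonoidHom.id (Fin k → G)).prodMap ((appendHom G k 1).comp
          ((MonoidHom.id (Fin k → G)).prodMap (diagHom G 1))))) :=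
      (appendHom_surj k (k + 1)).comp
        (Function.Surjective.prodMap Function.surjective_id hnested)
    have he : k + (k + 1) = 2 ^ (t + 1) - 1 := by
      have hpos : 0 < 2 ^ t := by positivity
      rw [pow_succ, hk]
      omega
    rw [← he, Nat.mul_succ]
    exact genBound_of_surjective _ hψ hstep

end Transport

/-- Proposition 2.6 (Wiegold–Wilson): if `G` is perfect and `d(G) = r`, then
`d(G^m) ≤ r(1 + ⌈log₂(m+1)⌉)`. -/
theorem stmt_10 (G : Type*) [Group G] [Group.FG G]
    (hperf : commutator G = ⊤) {r : ℕ} (hr : dGen G = r)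
    (m : ℕ) (hm : 1 ≤ m) :
    dGen (Fin m → G) ≤ r * (1 + Nat.clog 2 (m + 1)) := by
  classical
  have hne : {d | ∃ S : Set G, S.Finite ∧ S.ncard = d ∧ Subgroup.closure S = ⊤}.Nonempty := by
    obtain ⟨S, hS₁, hS₂⟩ := Group.fg_iff.mp ‹Group.FG G›
    exact ⟨S.ncard, S, hS₂, rfl, hS₁⟩
  have hmem : dGen G ∈ {d | ∃ S : Set G, S.Finite ∧ S.ncard = d ∧ Subgroup.closure S = ⊤} :=
    Nat.sInf_mem hne
  rw [hr] at hmem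
  obtain ⟨A, hAf, hAc, hAt⟩ := hmem
  set t := Nat.clog 2 (m + 1) with ht
  have h1 : m + 1 ≤ 2 ^ t := Nat.le_pow_clog (by norm_num) (m + 1)
  have hmle : m ≤ 2 ^ t - 1 := by omega
  have GB := pow_bound hperf hAf hAc.le hAt t
  have GBm := genBound_of_surjective (restrictHom G hmle) (restrictHom_surj hmle) GB
  obtain ⟨S, hfin, hcard, htop⟩ := GBm
  have hle : dGen (Fin m → G) ≤ r * t :=
    le_trans (Nat.sInf_le ⟨S, hfin, rfl, htop⟩) hcard
  exact le_trans hle (Nat.mul_le_mul_left r (by omega))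
end

section
/- Let G be a perfect group, let m ≥ 2, and let S be a subgroup of the direct power G^m such that for every pair of indices 1 ≤ j < j' ≤ m the coordinate projection p_{jj'} : G^m → G × G onto the j-th and j'-th factors maps S onto G × G. Then S = G^m. -/
open scoped commutatorElement in
private lemma goursat_aux (G : Type*) [Group G] (hperf : commutator G = ⊤) :
    ∀ m : ℕ, 2 ≤ m → ∀ S : Subgroup (Fin m → G),
      (∀ j j' : Fin m, j < j' → ∀ g g' : G, ∃ s ∈ S, s j = g ∧ s j' = g') → S = ⊤ := by
  intro m
  induction m with
  | zero => omega
  | succ n ih =>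
    intro hm S hS
    rcases Nat.lt_or_ge n 2 with h2 | h2
    · -- base case m = 2
      have hn : n = 1 := by omega
      subst hn
      ext x
      simp only [Subgroup.mem_top, iff_true]
      obtain ⟨s, hs, h0, h1⟩ := hS 0 1 (by decide) (x 0) (x 1)
      have hx : s = x := by
        funext i
        fin_cases i <;> assumption
      exact hx ▸ hs
    · -- inductive step, n ≥ 2
      set π : (Fin (n + 1) → G) →* (Fin n → G) :=
        MonoidHom.mk' (fun f i => f i.castSucc) (fun a b => rfl) with hπ
      set S' : Subgroup (Fin n → G) := S.map π with hS'def
      have hS' : ∀ j j' : Fin n, j < j' → ∀ g g' : G, ∃ s ∈ S', s j = g ∧ s j' = g' := by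
        intro j j' hjj' g g'
        obtain ⟨s, hs, hg, hg'⟩ := hS j.castSucc j'.castSucc (by simpa using hjj') g g'
        exact ⟨π s, Subgroup.mem_map.2 ⟨s, hs, rfl⟩, hg, hg'⟩
      have hS'top : S' = ⊤ := ih h2 S' hS'
      have hlast : ∀ j : Fin (n + 1), j ≠ Fin.last n → ∀ c : G, Pi.mulSingle j c ∈ S := by
        intro j hj
        have hjlt : j < Fin.last n := lt_of_le_of_ne (Fin.le_last j) hj
        have hjv : j.val < n := by
          have := Fin.lt_iff_val_lt_val.1 hjlt
          simpa using this
        set j₀ : Fin n := ⟨j.val, hjv⟩ with hj₀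
        have hj₀c : j₀.castSucc = j := by
          ext; rfl
        have key : ∀ p q : G, Pi.mulSingle j ⁅p, q⁆ ∈ S := by
          intro p q
          obtain ⟨s₁, hs₁, hs₁j, hs₁l⟩ := hS j (Fin.last n) hjlt p 1
          have hmem : Pi.mulSingle j₀ q ∈ S' := by rw [hS'top]; trivial
          obtain ⟨s₂, hs₂, hs₂π⟩ := Subgroup.mem_map.1 hmem
          have hu : s₁ * s₂ * s₁⁻¹ * s₂⁻¹ ∈ S :=
            mul_mem (mul_mem (mul_mem hs₁ hs₂) (inv_mem hs₁)) (inv_mem hs₂)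
          have heq : s₁ * s₂ * s₁⁻¹ * s₂⁻¹ = Pi.mulSingle j ⁅p, q⁆ := by
            funext i
            have hi2 : ∀ i₀ : Fin n, s₂ i₀.castSucc = (Pi.mulSingle j₀ q : Fin n → G) i₀ := by
              intro i₀
              exact congrFun hs₂π i₀
            rcases eq_or_ne i j with rfl | hij
            · have : s₂ i = q := by
                have := hi2 j₀
                rwa [hj₀c, Pi.mulSingle_eq_same] at this
              simp only [Pi.mul_apply, Pi.inv_apply, Pi.mulSingle_eq_same, hs₁j, this]
              rfl
            · rcases eq_or_ne i (Fin.last n) with rfl | hil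
              · simp only [Pi.mul_apply, Pi.inv_apply, hs₁l,
                  Pi.mulSingle_eq_of_ne hij]
                group
              · have hiv : i.val < n := by
                  rcases Fin.lt_or_lt_of_ne hil with h | h
                  · simpa using Fin.lt_iff_val_lt_val.1 h
                  · exact absurd (Fin.le_last i) (not_le.2 h)
                have hs₂i : s₂ i = 1 := by
                  have := hi2 ⟨i.val, hiv⟩
                  have hcast : (⟨i.val, hiv⟩ : Fin n).castSucc = i := by ext; rfl
                  rw [hcast] at this
                  rw [this, Pi.mulSingle_eq_of_ne]
                  intro hcontra
                  exact hij (by rw [← hcast, ← hj₀c, hcontra])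
                simp only [Pi.mul_apply, Pi.inv_apply, hs₂i,
                  Pi.mulSingle_eq_of_ne hij]
                group
          exact heq ▸ hu
        intro c
        have hT : (⊤ : Subgroup G) ≤
            Subgroup.comap (MonoidHom.mulSingle (fun _ : Fin (n + 1) => G) j) S := by
          rw [← hperf, commutator_eq_closure]
          apply (Subgroup.closure_le _).2
          rintro x ⟨p, q, rfl⟩
          exact key p q
        exact hT (Subgroup.mem_top c)
      have step : ∀ k : ℕ, ∀ y : Fin (n + 1) → G, y (Fin.last n) = 1 →
          (∀ i : Fin (n + 1), k ≤ i.val → i ≠ Fin.last n → y i = 1) → y ∈ S := by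
        intro k
        induction k with
        | zero =>
          intro y hyl hy
          have : y = 1 := by
            funext i
            rcases eq_or_ne i (Fin.last n) with rfl | h
            · exact hyl
            · exact hy i (Nat.zero_le _) h
          rw [this]; exact one_mem S
        | succ k ihk =>
          intro y hyl hy
          by_cases hkn : n ≤ k
          · exact ihk y hyl (fun i hi hil => hy i (by
              have : i.val < n := Fin.val_lt_last hil
              omega) hil)
          · push_neg at hkn
            set j : Fin (n + 1) := ⟨k, by omega⟩ with hjdef
            have hjl : j ≠ Fin.last n := by
              simp only [hjdef, Fin.ne_iff_vne, Fin.val_last]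
              omega
            set y' : Fin (n + 1) → G := Pi.mulSingle j (y j)⁻¹ * y with hy'def
            have hy'S : y' ∈ S := by
              apply ihk
              · simp only [hy'def, Pi.mul_apply, Pi.mulSingle_eq_of_ne (Ne.symm hjl), hyl,
                  one_mul]
              · intro i hi hil
                rcases eq_or_ne i j with rfl | hij
                · simp [hy'def]
                · have hik : (i : ℕ) ≠ k := fun h => hij (Fin.ext (by simp [hjdef, h]))
                  have : k + 1 ≤ i.val := by omega
                  simp only [hy'def, Pi.mul_apply, Pi.mulSingle_eq_of_ne hij,
                    hy i this hil, one_mul]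
            have : y = Pi.mulSingle j (y j) * y' := by
              rw [hy'def, ← mul_assoc, ← Pi.mulSingle_mul, mul_inv_cancel]
              simp
            rw [this]
            exact mul_mem (hlast j hjl (y j)) hy'S
      ext x
      simp only [Subgroup.mem_top, iff_true]
      have h0l : (0 : Fin (n + 1)) < Fin.last n := by
        rw [Fin.lt_iff_val_lt_val]
        simp only [Fin.val_zero, Fin.val_last]
        omega
      obtain ⟨s, hs, -, hsl⟩ := hS 0 (Fin.last n) h0l 1 (x (Fin.last n))
      have hx : x * s⁻¹ ∈ S := by
        apply step (n + 1)
        · simp [hsl]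
        · intro i hi _
          have := i.isLt
          omega
      have := mul_mem hx hs
      simpa using this

/-- If `G` is perfect, `m ≥ 2`, and `S ≤ G^m` surjects onto `G × G` under
every coordinate projection `p_{jj'}` with `j < j'`, then `S = G^m`. -/
theorem stmt_11 (G : Type*) [Group G] (hperf : commutator G = ⊤)
    (m : ℕ) (hm : 2 ≤ m) (S : Subgroup (Fin m → G))
    (hS : ∀ j j' : Fin m, j < j' → ∀ g g' : G, ∃ s ∈ S, s j = g ∧ s j' = g') :
    S = ⊤ := goursat_aux G hperf m hm S hS
end

section
/- Let p be a positive integer and let H = ⟨a, b | b a^p b⁻¹ = a^{p+1}⟩. For every group Q and every surjective homomorphism φ : H → Q, if φ(a) has finite order then φ([bab⁻¹, a]) = 1. -/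
/-- The single relator `b aᵖ b⁻¹ a^{-(p+1)}` of the Baumslag–Solitar group
`BS(p, p+1) = ⟨a, b ∣ b aᵖ b⁻¹ = a^{p+1}⟩`, with `a = of 0`, `b = of 1`. -/
def bsRel (p : ℕ) : Set (FreeGroup (Fin 2)) :=
  {FreeGroup.of 1 * FreeGroup.of 0 ^ p * (FreeGroup.of 1)⁻¹ *
    (FreeGroup.of 0 ^ (p + 1))⁻¹}

/-- `H = ⟨a, b ∣ b aᵖ b⁻¹ = a^{p+1}⟩`. -/
abbrev BS (p : ℕ) : Type :=
  PresentedGroup (bsRel p)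

universe u

open scoped commutatorElement

/-- Lemma 3.1: in any quotient `Q` of `H = ⟨a, b ∣ b aᵖ b⁻¹ = a^{p+1}⟩` in
which the image of `a` has finite order, the image of `[bab⁻¹, a]` is
trivial. -/
theorem stmt_12 (p : ℕ) (hp : 0 < p) (Q : Type u) [Group Q]
    (φ : BS p →* Q) (hφ : Function.Surjective φ)
    (hfin : IsOfFinOrder (φ (PresentedGroup.of 0))) :
    φ ⁅(PresentedGroup.of 1 : BS p) * PresentedGroup.of 0 *
          (PresentedGroup.of 1)⁻¹,
        PresentedGroup.of 0⁆ = 1 := by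
  set A : Q := φ (PresentedGroup.of 0) with hA
  set B : Q := φ (PresentedGroup.of 1) with hB
  -- the relation holds in BS p, hence in Q
  have hrel0 : (PresentedGroup.of 1 : BS p) * (PresentedGroup.of 0) ^ p *
      (PresentedGroup.of 1)⁻¹ * ((PresentedGroup.of 0) ^ (p + 1))⁻¹ = 1 := by
    have hmem : (FreeGroup.of 1 * FreeGroup.of 0 ^ p * (FreeGroup.of 1)⁻¹ *
        (FreeGroup.of 0 ^ (p + 1))⁻¹ : FreeGroup (Fin 2)) ∈
        Subgroup.normalClosure (bsRel p) :=
      Subgroup.subset_normalClosure rfl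
    have := (QuotientGroup.eq_one_iff (N := Subgroup.normalClosure (bsRel p))
      _).mpr hmem
    simpa [PresentedGroup.of] using (PresentedGroup.mk_eq_one_iff (rels := bsRel p)).mpr hmem
  have hrel : B * A ^ p * B⁻¹ = A ^ (p + 1) := by
    have h := congrArg φ hrel0
    simp only [map_mul, map_inv, map_pow, map_one, ← hA, ← hB] at h
    have := mul_eq_one_iff_eq_inv.mp h
    simpa using this
  have hsemi : SemiconjBy B (A ^ p) (A ^ (p + 1)) := by
    unfold SemiconjBy
    rw [← hrel]; group
  have hord : orderOf (A ^ p) = orderOf (A ^ (p + 1)) := hsemi.orderOf_eq B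
  have hn : 0 < orderOf A := hfin.orderOf_pos
  set n := orderOf A with hnn
  rw [orderOf_pow' A hp.ne', orderOf_pow' A (Nat.succ_ne_zero p)] at hord
  have hgeq : Nat.gcd n p = Nat.gcd n (p + 1) := by
    have h1 := Nat.div_div_self (Nat.gcd_dvd_left n p) hn.ne'
    have h2 := Nat.div_div_self (Nat.gcd_dvd_left n (p + 1)) hn.ne'
    rw [← h1, ← h2, hord]
  have hcop : Nat.gcd n p = 1 := by
    have h1 : Nat.gcd n p ∣ p := Nat.gcd_dvd_right n p
    have h2 : Nat.gcd n p ∣ p + 1 := hgeq ▸ Nat.gcd_dvd_right n (p + 1)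
    have : Nat.gcd n p ∣ 1 := by simpa using Nat.dvd_sub h2 h1
    exact Nat.dvd_one.mp this
  -- Bezout: A is a power of A^p
  have hbez := Nat.gcd_eq_gcd_ab n p
  rw [hcop] at hbez
  have hApow : A = (A ^ p) ^ (Nat.gcdB n p) := by
    have hAn : A ^ (n : ℤ) = 1 := by
      rw [zpow_natCast]; exact pow_orderOf_eq_one A
    calc A = A ^ (1 : ℤ) := (zpow_one A).symm
      _ = A ^ ((n : ℤ) * Nat.gcdA n p + (p : ℤ) * Nat.gcdB n p) := by
          rw [← hbez]; norm_num
      _ = (A ^ (n : ℤ)) ^ (Nat.gcdA n p) * (A ^ (p : ℤ)) ^ (Nat.gcdB n p) := by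
          rw [zpow_add, zpow_mul, zpow_mul]
      _ = (A ^ p) ^ (Nat.gcdB n p) := by rw [hAn, zpow_natCast]; group
  -- hence B A B⁻¹ is a power of A
  have hC : B * A * B⁻¹ = (A ^ (p + 1)) ^ (Nat.gcdB n p) := by
    calc B * A * B⁻¹ = B * (A ^ p) ^ (Nat.gcdB n p) * B⁻¹ := by rw [← hApow]
      _ = (B * (A ^ p) * B⁻¹) ^ (Nat.gcdB n p) := by
          rw [conj_zpow]
      _ = (A ^ (p + 1)) ^ (Nat.gcdB n p) := by rw [hrel]
  have hcomm : Commute (B * A * B⁻¹) A := by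
    rw [hC]
    exact ((Commute.refl A).pow_left (p + 1)).zpow_left _
  rw [map_commutatorElement]
  simp only [map_mul, map_inv, ← hA, ← hB]
  exact commutatorElement_eq_one_iff_commute.mpr hcomm
end

section
/- Let p be a positive integer and let B_p = ⟨a, b, α, β | b a^p b⁻¹ = a^{p+1}, β α^p β⁻¹ = α^{p+1}, [bab⁻¹, a] = β, [βαβ⁻¹, α] = b⟩. Then for every group Q with Q ≠ 1 and every surjective homomorphism φ : B_p → Q, the element φ(a) has infinite order. -/
open scoped commutatorElement

/-- The four relators of
`B_p = ⟨a, b, α, β ∣ b aᵖ b⁻¹ = a^{p+1}, β αᵖ β⁻¹ = α^{p+1},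
[bab⁻¹, a] = β, [βαβ⁻¹, α] = b⟩`,
with `a = of 0`, `b = of 1`, `α = of 2`, `β = of 3`. -/
def bpRels (p : ℕ) : Set (FreeGroup (Fin 4)) :=
  { FreeGroup.of 1 * FreeGroup.of 0 ^ p * (FreeGroup.of 1)⁻¹ *
      (FreeGroup.of 0 ^ (p + 1))⁻¹,
    FreeGroup.of 3 * FreeGroup.of 2 ^ p * (FreeGroup.of 3)⁻¹ *
      (FreeGroup.of 2 ^ (p + 1))⁻¹,
    ⁅(FreeGroup.of 1 : FreeGroup (Fin 4)) * FreeGroup.of 0 * (FreeGroup.of 1)⁻¹, FreeGroup.of 0⁆ *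
      (FreeGroup.of 3)⁻¹,
    ⁅(FreeGroup.of 3 : FreeGroup (Fin 4)) * FreeGroup.of 2 * (FreeGroup.of 3)⁻¹, FreeGroup.of 2⁆ *
      (FreeGroup.of 1)⁻¹ }

/-- The Bridson–Grunewald group `B_p`. -/
abbrev Bp (p : ℕ) : Type :=
  PresentedGroup (bpRels p)

universe u

/-- Proposition 3.2: `a ∈ B_p` has infinite order in every non-trivial
quotient of `B_p`. -/
theorem stmt_13 (p : ℕ) (hp : 0 < p) (Q : Type u) [Group Q] [Nontrivial Q]
    (φ : Bp p →* Q) (hφ : Function.Surjective φ) :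
    ¬ IsOfFinOrder (φ (PresentedGroup.of 0)) := by
  intro hfin
  set f : FreeGroup (Fin 4) →* Q := φ.comp (PresentedGroup.mk (bpRels p)) with hfdef
  have hrel : ∀ r ∈ bpRels p, f r = 1 := by
    intro r hr
    have h1 : (PresentedGroup.mk (bpRels p)) r = 1 :=
      (QuotientGroup.eq_one_iff r).2 (Subgroup.subset_normalClosure hr)
    simp [hfdef, MonoidHom.comp_apply, h1]
  set A : Q := f (FreeGroup.of 0) with hA
  set B : Q := f (FreeGroup.of 1) with hB
  set C : Q := f (FreeGroup.of 2) with hC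
  set D : Q := f (FreeGroup.of 3) with hD
  have hfinA : IsOfFinOrder A := hfin
  have hR1 : B * A ^ p * B⁻¹ = A ^ (p + 1) := by
    have := hrel _ (show _ ∈ bpRels p from Set.mem_insert _ _)
    simp only [map_mul, map_pow, map_inv] at this
    rw [mul_inv_eq_one] at this
    exact this
  have hR2 : D * C ^ p * D⁻¹ = C ^ (p + 1) := by
    have := hrel _ (show _ ∈ bpRels p from
      Set.mem_insert_of_mem _ (Set.mem_insert _ _))
    simp only [map_mul, map_pow, map_inv] at this
    rw [mul_inv_eq_one] at this
    exact this
  have hR3 : ⁅B * A * B⁻¹, A⁆ = D := by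
    have := hrel _ (show _ ∈ bpRels p from
      Set.mem_insert_of_mem _ (Set.mem_insert_of_mem _ (Set.mem_insert _ _)))
    simp only [commutatorElement_def, map_mul, map_inv] at this
    rw [mul_inv_eq_one] at this
    simpa [commutatorElement_def, mul_assoc] using this
  have hR4 : ⁅D * C * D⁻¹, C⁆ = B := by
    have := hrel _ (show _ ∈ bpRels p from
      Set.mem_insert_of_mem _ (Set.mem_insert_of_mem _
        (Set.mem_insert_of_mem _ rfl)))
    simp only [commutatorElement_def, map_mul, map_inv] at this
    rw [mul_inv_eq_one] at this
    simpa [commutatorElement_def, mul_assoc] using this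
  set n : ℕ := orderOf A with hn
  have hnpos : 0 < n := hfinA.orderOf_pos
  have hsemi : SemiconjBy B (A ^ p) (A ^ (p + 1)) := by
    unfold SemiconjBy
    rw [← hR1]
    group
  have hord : orderOf (A ^ p) = orderOf (A ^ (p + 1)) := hsemi.orderOf_eq B
  have hdiv : n / Nat.gcd n p = n / Nat.gcd n (p + 1) := by
    rw [hfinA.orderOf_pow, hfinA.orderOf_pow] at hord
    exact hord
  have hgcd : Nat.gcd n p = Nat.gcd n (p + 1) := by
    have h1 : Nat.gcd n p ∣ n := Nat.gcd_dvd_left n p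
    have h2 : Nat.gcd n (p + 1) ∣ n := Nat.gcd_dvd_left n (p + 1)
    calc Nat.gcd n p = n / (n / Nat.gcd n p) := by
          rw [Nat.div_div_self h1 hnpos.ne']
      _ = n / (n / Nat.gcd n (p + 1)) := by rw [hdiv]
      _ = Nat.gcd n (p + 1) := Nat.div_div_self h2 hnpos.ne'
  have hcop : Nat.gcd n p = 1 := by
    have h1 : Nat.gcd n p ∣ p := Nat.gcd_dvd_right n p
    have h2 : Nat.gcd n p ∣ p + 1 := hgcd ▸ Nat.gcd_dvd_right n (p + 1)
    have h3 : Nat.gcd n p ∣ 1 := by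
      have := Nat.dvd_sub h2 h1
      simpa using this
    exact Nat.dvd_one.mp h3
  have hcomm : Commute (B * A * B⁻¹) A := by
    rcases eq_or_lt_of_le (Nat.succ_le_of_lt hnpos) with h1 | h1
    · have : A = 1 := orderOf_eq_one_iff.mp h1.symm
      rw [this]
      simp
    · obtain ⟨u, -, hu⟩ := Nat.exists_mul_mod_eq_one_of_coprime
        (show Nat.Coprime p n from Nat.coprime_comm.mp hcop) h1
      have hApu : A ^ (p * u) = A := by
        rw [← pow_mod_orderOf, ← hn, hu, pow_one]
      have hconj : B * A * B⁻¹ = A ^ ((p + 1) * u) := by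
        calc B * A * B⁻¹ = B * A ^ (p * u) * B⁻¹ := by rw [hApu]
          _ = B * (A ^ p) ^ u * B⁻¹ := by rw [pow_mul]
          _ = (B * A ^ p * B⁻¹) ^ u := by rw [conj_pow]
          _ = (A ^ (p + 1)) ^ u := by rw [hR1]
          _ = A ^ ((p + 1) * u) := by rw [pow_mul]
      rw [hconj]
      exact (Commute.refl A).pow_left _
  have hD1 : D = 1 := by
    rw [← hR3]
    exact commutatorElement_eq_one_iff_commute.mpr hcomm
  have hB1 : B = 1 := by
    rw [← hR4, hD1]
    group
  have hA1 : A = 1 := by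
    have := hR1
    rw [hB1] at this
    simp only [one_mul, inv_one, mul_one, pow_succ] at this
    exact left_eq_mul.mp this
  have hC1 : C = 1 := by
    have := hR2
    rw [hD1] at this
    simp only [one_mul, inv_one, mul_one, pow_succ] at this
    exact left_eq_mul.mp this
  have hall : ∀ g : Bp p, φ g = 1 := by
    intro g
    have hmem : g ∈ φ.ker := by
      refine PresentedGroup.generated_by (bpRels p) φ.ker ?_ g
      intro j
      rw [MonoidHom.mem_ker]
      fin_cases j
      · exact hA1
      · exact hB1
      · exact hC1
      · exact hD1
    exact hmem
  obtain ⟨x, y, hxy⟩ := exists_pair_ne Q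
  obtain ⟨gx, rfl⟩ := hφ x
  obtain ⟨gy, rfl⟩ := hφ y
  exact hxy ((hall gx).trans (hall gy).symm)
end
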